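/- arXiv:math/9904170 — 2 statements merged into one kernel-verified Lean document; each statement's English description precedes it below -/
import Mathlib

section
/- Fix an index α. Let a_{ij} (i ≠ j) be smooth on Ω, let h be a smooth solution of ∂_i ∂_j h = a_{ij} ∂_i h + a_{ji} ∂_j h (i ≠ j) with h, ∂_α h and 1 − a_{iα} h/∂_α h (i ≠ α) nonvanishing, and let h_1,…,h_n be nonvanishing smooth functions (Lamé coefficients) with ∂_j h_i = a_{ij} h_i for all j ≠ i. Define H_α = h_α·(h/∂_α h) and H_i = h_i·(1 − a_{iα} h/∂_α h) for i ≠ α, and define A_{αi} = (1 − a_{iα} h/∂_α h)·(∂_i h/h) for i ≠ α, A_{ij} = a_{ij} + ∂_j ln(1 − a_{iα} h/∂_α h) for i ≠ α, j ≠ i. Then ∂_j H_i = A_{ij} H_i for all j ≠ i. -/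
/-!
Each `H_i` is `h_i` times a factor, so `∂_j ln H_i = a_{ij} + ∂_j ln (factor)`. For `i ≠ α` this is
`A_{ij}` by definition. For `i = α` the factor is `h / ∂_α h`, and the equation
`∂_j ∂_α h = a_{jα} ∂_j h + a_{αj} ∂_α h` turns its logarithmic derivative
`∂_j h / h - ∂_j ∂_α h / ∂_α h` into `(1 - a_{jα} h / ∂_α h) ∂_j h / h - a_{αj} = A_{αj} - a_{αj}`.
-/

/-- Partial derivative with respect to the `i`-th coordinate. -/
noncomputable def pd {n : ℕ} {F : Type*} [NormedAddCommGroup F] [NormedSpace ℝ F]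
    (i : Fin n) (w : (Fin n → ℝ) → F) : (Fin n → ℝ) → F :=
  fun p => fderiv ℝ w p (Pi.single i 1)

section PartialDerivatives

variable {n : ℕ} {f g : (Fin n → ℝ) → ℝ} {p : Fin n → ℝ}

theorem ContDiffAt.differentiableAt_pd {m : WithTop ℕ∞} (i : Fin n) (hf : ContDiffAt ℝ m f p)
    (hm : 2 ≤ m) : DifferentiableAt ℝ (pd i f) p :=
  ((hf.fderiv_right (m := 1) hm).differentiableAt one_ne_zero).clm_apply
    (differentiableAt_const _)

theorem pd_mul (j : Fin n) (hf : DifferentiableAt ℝ f p) (hg : DifferentiableAt ℝ g p) :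
    pd j (fun x => f x * g x) p = pd j f p * g p + f p * pd j g p := by
  simp only [pd, fderiv_fun_mul hf hg, add_apply, smul_apply, smul_eq_mul]
  ring

theorem pd_inv (j : Fin n) (hg : DifferentiableAt ℝ g p) (hg0 : g p ≠ 0) :
    pd j (fun x => (g x)⁻¹) p = -pd j g p / g p ^ 2 := by
  have hinv : HasFDerivAt (fun x => (g x)⁻¹) (-(g p ^ 2)⁻¹ • fderiv ℝ g p) p :=
    (hasDerivAt_inv hg0).comp_hasFDerivAt p hg.hasFDerivAt
  rw [pd, hinv.fderiv, pd]
  simp only [smul_apply, smul_eq_mul]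
  ring

theorem DifferentiableAt.fun_div_of_ne_zero (hf : DifferentiableAt ℝ f p)
    (hg : DifferentiableAt ℝ g p) (hg0 : g p ≠ 0) : DifferentiableAt ℝ (fun x => f x / g x) p := by
  simpa only [div_eq_mul_inv] using hf.fun_mul (hg.fun_inv hg0)

/-- Logarithmic derivatives add under products: `∂ ln (f g) = ∂ ln f + ∂ ln g`, with `∂ ln f = c`
written as `∂ f = c f`. -/
theorem pd_mul_eq_add_mul {j : Fin n} {c d : ℝ} (hf : DifferentiableAt ℝ f p)
    (hg : DifferentiableAt ℝ g p) (hfc : pd j f p = c * f p) (hgd : pd j g p = d * g p) :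
    pd j (fun x => f x * g x) p = (c + d) * (f p * g p) := by
  rw [pd_mul j hf hg, hfc, hgd]
  ring

theorem pd_div_eq_sub_mul (j : Fin n) (hf : DifferentiableAt ℝ f p)
    (hg : DifferentiableAt ℝ g p) (hf0 : f p ≠ 0) (hg0 : g p ≠ 0) :
    pd j (fun x => f x / g x) p = (pd j f p / f p - pd j g p / g p) * (f p / g p) := by
  simp only [div_eq_mul_inv]
  rw [pd_mul j (g := fun x => (g x)⁻¹) hf (hg.inv hg0), pd_inv j hg hg0]
  field_simp
  ring

end PartialDerivatives

theorem pd_div_pd_of_pd_pd_eq {n : ℕ} {h : (Fin n → ℝ) → ℝ} {p : Fin n → ℝ} {α j : Fin n}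
    {b c : ℝ} (dh : DifferentiableAt ℝ h p) (dpdh : DifferentiableAt ℝ (pd α h) p)
    (hh0 : h p ≠ 0) (hdh0 : pd α h p ≠ 0) (heq : pd j (pd α h) p = b * pd j h p + c * pd α h p) :
    pd j (fun x => h x / pd α h x) p
      = ((1 - b * h p / pd α h p) * (pd j h p / h p) - c) * (h p / pd α h p) := by
  rw [pd_div_eq_sub_mul j dh dpdh hh0 hdh0, heq]
  field_simp
  ring

theorem stmt12_general {n : ℕ} (Ω : Set (Fin n → ℝ)) (hΩ : IsOpen Ω) (α : Fin n)
    (a : Fin n → Fin n → (Fin n → ℝ) → ℝ)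
    (hasm : ∀ i j, i ≠ j → ContDiffOn ℝ (⊤ : ℕ∞) (a i j) Ω)
    (h : (Fin n → ℝ) → ℝ) (hhsm : ContDiffOn ℝ (⊤ : ℕ∞) h Ω)
    (hheq : ∀ i j, i ≠ j → ∀ p ∈ Ω,
      pd i (pd j h) p = a i j p * pd i h p + a j i p * pd j h p)
    (hh0 : ∀ p ∈ Ω, h p ≠ 0)
    (hdh0 : ∀ p ∈ Ω, pd α h p ≠ 0)
    (hw0 : ∀ i, i ≠ α → ∀ p ∈ Ω, 1 - a i α p * h p / pd α h p ≠ 0)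
    (hl : Fin n → (Fin n → ℝ) → ℝ)
    (hlsm : ∀ i, ContDiffOn ℝ (⊤ : ℕ∞) (hl i) Ω)
    (hlame : ∀ i j, j ≠ i → ∀ p ∈ Ω, pd j (hl i) p = a i j p * hl i p)
    (H : Fin n → (Fin n → ℝ) → ℝ)
    (hHα : ∀ p, H α p = hl α p * (h p / pd α h p))
    (hHi : ∀ i, i ≠ α → ∀ p, H i p = hl i p * (1 - a i α p * h p / pd α h p))
    (A : Fin n → Fin n → (Fin n → ℝ) → ℝ)
    (hAα : ∀ i, i ≠ α → ∀ p,
      A α i p = (1 - a i α p * h p / pd α h p) * (pd i h p / h p))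
    (hAi : ∀ i j, i ≠ α → j ≠ i → ∀ p,
      A i j p = a i j p
        + pd j (fun x => 1 - a i α x * h x / pd α h x) p
            / (1 - a i α p * h p / pd α h p)) :
    ∀ i j, j ≠ i → ∀ p ∈ Ω, pd j (H i) p = A i j p * H i p := by
  intro i j hji p hp
  have smooth_at {f : (Fin n → ℝ) → ℝ} (hf : ContDiffOn ℝ (⊤ : ℕ∞) f Ω) :
      ContDiffAt ℝ (⊤ : ℕ∞) f p :=
    hf.contDiffAt (hΩ.mem_nhds hp)
  have dh : DifferentiableAt ℝ h p := (smooth_at hhsm).differentiableAt (by simp)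
  have dhl : DifferentiableAt ℝ (hl i) p := (smooth_at (hlsm i)).differentiableAt (by simp)
  have dpdh : DifferentiableAt ℝ (pd α h) p := (smooth_at hhsm).differentiableAt_pd α
    (WithTop.coe_le_coe.mpr le_top)
  obtain rfl | hiα := eq_or_ne i α
  · have dq := dh.fun_div_of_ne_zero dpdh (hdh0 p hp)
    have hq := pd_div_pd_of_pd_pd_eq dh dpdh (hh0 p hp) (hdh0 p hp) (hheq j i hji p hp)
    rw [funext hHα, pd_mul_eq_add_mul dhl dq (hlame i j hji p hp) hq, hAα j hji]
    ring
  · have hw := hw0 i hiα p hp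
    have da : DifferentiableAt ℝ (a i α) p :=
      (smooth_at (hasm i α hiα)).differentiableAt (by simp)
    have dw : DifferentiableAt ℝ (fun x => 1 - a i α x * h x / pd α h x) p :=
      (differentiableAt_const 1).fun_sub ((da.fun_mul dh).fun_div_of_ne_zero dpdh (hdh0 p hp))
    rw [funext (hHi i hiα), pd_mul_eq_add_mul dhl dw (hlame i j hji p hp)
      (div_mul_cancel₀ _ hw).symm, hAi i j hiα hji]

/-- the Lévy-transformed Lamé coefficients
`H_α = h_α·h/∂_α h`, `H_i = h_i·(1 − a_{iα}h/∂_α h)` satisfy `∂_j H_i = A_{ij} H_i`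
for `j ≠ i`, where `A = L_α(a)` are the transformed coefficients. -/
theorem stmt12 {n : ℕ} (Ω : Set (Fin n → ℝ)) (hΩ : IsOpen Ω) (α : Fin n)
    (a : Fin n → Fin n → (Fin n → ℝ) → ℝ)
    (hasm : ∀ i j, i ≠ j → ContDiffOn ℝ (⊤ : ℕ∞) (a i j) Ω)
    (h : (Fin n → ℝ) → ℝ) (hhsm : ContDiffOn ℝ (⊤ : ℕ∞) h Ω)
    (hheq : ∀ i j, i ≠ j → ∀ p ∈ Ω,
      pd i (pd j h) p = a i j p * pd i h p + a j i p * pd j h p)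
    (hh0 : ∀ p ∈ Ω, h p ≠ 0)
    (hdh0 : ∀ p ∈ Ω, pd α h p ≠ 0)
    (hw0 : ∀ i, i ≠ α → ∀ p ∈ Ω, 1 - a i α p * h p / pd α h p ≠ 0)
    (hl : Fin n → (Fin n → ℝ) → ℝ)
    (hlsm : ∀ i, ContDiffOn ℝ (⊤ : ℕ∞) (hl i) Ω)
    (hl0 : ∀ i, ∀ p ∈ Ω, hl i p ≠ 0)
    (hlame : ∀ i j, j ≠ i → ∀ p ∈ Ω, pd j (hl i) p = a i j p * hl i p)
    (H : Fin n → (Fin n → ℝ) → ℝ)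
    (hHα : ∀ p, H α p = hl α p * (h p / pd α h p))
    (hHi : ∀ i, i ≠ α → ∀ p, H i p = hl i p * (1 - a i α p * h p / pd α h p))
    (A : Fin n → Fin n → (Fin n → ℝ) → ℝ)
    (hAα : ∀ i, i ≠ α → ∀ p,
      A α i p = (1 - a i α p * h p / pd α h p) * (pd i h p / h p))
    (hAi : ∀ i j, i ≠ α → j ≠ i → ∀ p,
      A i j p = a i j p
        + pd j (fun x => 1 - a i α x * h x / pd α h x) p
            / (1 - a i α p * h p / pd α h p)) :
    ∀ i j, j ≠ i → ∀ p ∈ Ω, pd j (H i) p = A i j p * H i p :=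
  stmt12_general Ω hΩ α a hasm h hhsm hheq hh0 hdh0 hw0 hl hlsm hlame H hHα hHi A hAα hAi
end

section
/- Fix an index α. Let a_{ij} (i ≠ j) be smooth on Ω satisfying the semihamiltonian conditions ∂_k a_{ij} = a_{ik} a_{kj} + a_{ij} a_{jk} − a_{ij} a_{ik} for all pairwise distinct i, j, k, and let μ^1,…,μ^n be smooth with ∂_j μ^i = a_{ij}(μ^j − μ^i) for all i ≠ j, with μ^α, ∂_α μ^α and 1 − μ^i/μ^α (i ≠ α) nonvanishing. Define A_{αi} = a_{αi} + ∂_i ln(∂_α μ^α/μ^α) for i ≠ α, and A_{ij} = a_{ij} + ∂_j ln(1 − μ^i/μ^α) for i ≠ α, j ≠ i (where ∂_j ln w means ∂_j w/w). Then for every pair of smooth functions u, q with ∂_i ∂_j u = a_{ij} ∂_i u + a_{ji} ∂_j u (i ≠ j) and ∂_i q = μ^i ∂_i u for all i, the adjoint Lévy transform U = u − q/μ^α satisfies ∂_i ∂_j U = A_{ij} ∂_i U + A_{ji} ∂_j U for all i ≠ j. -/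
section PartialDerivative

variable {n : ℕ} {f g : (Fin n → ℝ) → ℝ} {Ω : Set (Fin n → ℝ)} {p : Fin n → ℝ} {i j : Fin n}

theorem Filter.EventuallyEq.pd_eq (h : f =ᶠ[nhds p] g) : pd i f p = pd i g p := by
  rw [pd, pd, h.fderiv_eq]

theorem ContDiffOn.differentiableAt_of_isOpen (hf : ContDiffOn ℝ (⊤ : ℕ∞) f Ω) (hΩ : IsOpen Ω)
    (hp : p ∈ Ω) : DifferentiableAt ℝ f p :=
  (hf.differentiableOn (by simp)).differentiableAt (hΩ.mem_nhds hp)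

theorem ContDiffOn.pd (hf : ContDiffOn ℝ (⊤ : ℕ∞) f Ω) (hΩ : IsOpen Ω) (j : Fin n) :
    ContDiffOn ℝ (⊤ : ℕ∞) (pd j f) Ω :=
  (hf.fderiv_of_isOpen hΩ (by simp)).clm_apply contDiffOn_const

theorem pd_comm (hf : ContDiffAt ℝ 2 f p) (i j : Fin n) :
    pd i (pd j f) p = pd j (pd i f) p := by
  have hsymm : IsSymmSndFDerivAt ℝ f p :=
    hf.isSymmSndFDerivAt (by simp [minSmoothness_of_isRCLikeNormedField])
  have hdf : DifferentiableAt ℝ (fderiv ℝ f) p :=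
    (hf.fderiv_right (m := 1) (by norm_num)).differentiableAt one_ne_zero
  have hswap (v w : Fin n → ℝ) :
      fderiv ℝ (fun x => fderiv ℝ f x v) p w = fderiv ℝ (fderiv ℝ f) p w v := by
    simp [fderiv_clm_apply hdf (differentiableAt_const v)]
  unfold pd
  rw [hswap, hsymm, ← hswap]

theorem pd_fun_sub (hf : DifferentiableAt ℝ f p) (hg : DifferentiableAt ℝ g p) :
    pd i (fun x => f x - g x) p = pd i f p - pd i g p := by
  simp [pd, fderiv_fun_sub hf hg]

theorem pd_fun_mul (hf : DifferentiableAt ℝ f p) (hg : DifferentiableAt ℝ g p) :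
    pd i (fun x => f x * g x) p = pd i f p * g p + f p * pd i g p := by
  simp [pd, fderiv_fun_mul hf hg]
  ring

theorem differentiableAt_fun_div (hf : DifferentiableAt ℝ f p) (hg : DifferentiableAt ℝ g p)
    (h0 : g p ≠ 0) : DifferentiableAt ℝ (fun x => f x / g x) p := by
  simpa only [div_eq_mul_inv] using hf.fun_mul (hg.fun_inv h0)

theorem pd_fun_inv (hg : DifferentiableAt ℝ g p) (h0 : g p ≠ 0) :
    pd i (fun x => (g x)⁻¹) p = -pd i g p / g p ^ 2 := by
  have h : HasFDerivAt (fun x => (g x)⁻¹)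
      ((ContinuousLinearMap.toSpanSingleton ℝ (-(g p ^ 2)⁻¹)).comp (fderiv ℝ g p)) p :=
    (hasFDerivAt_inv h0).comp p hg.hasFDerivAt
  simp [pd, h.fderiv, div_eq_mul_inv, mul_comm]

theorem pd_fun_div (hf : DifferentiableAt ℝ f p) (hg : DifferentiableAt ℝ g p) (h0 : g p ≠ 0) :
    pd i (fun x => f x / g x) p = (pd i f p * g p - f p * pd i g p) / g p ^ 2 := by
  simp only [div_eq_mul_inv, pd_fun_mul hf (hg.fun_inv h0), pd_fun_inv hg h0]
  field_simp
  ring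

theorem pd_one_sub_div (hf : DifferentiableAt ℝ f p) (hg : DifferentiableAt ℝ g p)
    (h0 : g p ≠ 0) :
    pd i (fun x => 1 - f x / g x) p = -((pd i f p * g p - f p * pd i g p) / g p ^ 2) := by
  rw [pd_fun_sub (differentiableAt_const 1) (differentiableAt_fun_div hf hg h0),
    pd_fun_div hf hg h0]
  simp [pd]

end PartialDerivative

theorem sub_ne_zero_of_one_sub_div_ne_zero {x y : ℝ} (hy : y ≠ 0) (h : 1 - x / y ≠ 0) :
    y - x ≠ 0 := by
  rwa [one_sub_div hy, div_ne_zero_iff, and_iff_left hy] at h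

noncomputable def adjointLevy {n : ℕ} (α : Fin n) (mu : Fin n → (Fin n → ℝ) → ℝ)
    (u q : (Fin n → ℝ) → ℝ) : (Fin n → ℝ) → ℝ :=
  fun x => u x - q x / mu α x

section AdjointLevy

open Filter Topology

variable {n : ℕ} {Ω : Set (Fin n → ℝ)} {α k : Fin n} {a : Fin n → Fin n → (Fin n → ℝ) → ℝ}
  {mu : Fin n → (Fin n → ℝ) → ℝ} {u q : (Fin n → ℝ) → ℝ} {p : Fin n → ℝ}

theorem pd_adjointLevy (hu : DifferentiableAt ℝ u p) (hq : DifferentiableAt ℝ q p)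
    (hμ : DifferentiableAt ℝ (mu α) p) (hμ0 : mu α p ≠ 0)
    (hflux : pd k q p = mu k p * pd k u p) :
    pd k (adjointLevy α mu u q) p
      = (1 - mu k p / mu α p) * pd k u p + q p / mu α p * (pd k (mu α) p / mu α p) := by
  unfold adjointLevy
  rw [pd_fun_sub hu (differentiableAt_fun_div hq hμ hμ0), pd_fun_div hq hμ hμ0, hflux]
  field_simp
  ring

theorem pd_adjointLevy_self (hu : DifferentiableAt ℝ u p) (hq : DifferentiableAt ℝ q p)
    (hμ : DifferentiableAt ℝ (mu α) p) (hμ0 : mu α p ≠ 0)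
    (hflux : pd α q p = mu α p * pd α u p) :
    pd α (adjointLevy α mu u q) p = pd α (mu α) p / mu α p * (q p / mu α p) := by
  rw [pd_adjointLevy hu hq hμ hμ0 hflux, div_self hμ0]
  ring

theorem pd_adjointLevy_of_ne (hu : DifferentiableAt ℝ u p) (hq : DifferentiableAt ℝ q p)
    (hμ : DifferentiableAt ℝ (mu α) p) (hμ0 : mu α p ≠ 0)
    (hflux : pd k q p = mu k p * pd k u p)
    (hμk : pd k (mu α) p = a α k p * (mu k p - mu α p)) :
    pd k (adjointLevy α mu u q) p
      = (1 - mu k p / mu α p) * (pd k u p - a α k p * q p / mu α p) := by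
  rw [pd_adjointLevy hu hq hμ hμ0 hflux, hμk]
  field_simp
  ring

theorem pd_pd_adjointLevy_self (hΩ : IsOpen Ω) (hu : ContDiffOn ℝ (⊤ : ℕ∞) u Ω)
    (hq : ContDiffOn ℝ (⊤ : ℕ∞) q Ω) (hmusm : ∀ i, ContDiffOn ℝ (⊤ : ℕ∞) (mu i) Ω)
    (hmueq : ∀ i j, i ≠ j → ∀ p ∈ Ω, pd j (mu i) p = a i j p * (mu j p - mu i p))
    (hmuα0 : ∀ p ∈ Ω, mu α p ≠ 0) (hdmuα0 : ∀ p ∈ Ω, pd α (mu α) p ≠ 0)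
    (hw0 : ∀ i, i ≠ α → ∀ p ∈ Ω, 1 - mu i p / mu α p ≠ 0)
    {A : Fin n → Fin n → (Fin n → ℝ) → ℝ}
    (hAα : ∀ i, i ≠ α → ∀ p,
      A α i p = a α i p
        + pd i (fun x => pd α (mu α) x / mu α x) p / (pd α (mu α) p / mu α p))
    (hAi : ∀ i j, i ≠ α → j ≠ i → ∀ p,
      A i j p = a i j p
        + pd j (fun x => 1 - mu i x / mu α x) p / (1 - mu i p / mu α p))
    (hflux : ∀ i, ∀ p ∈ Ω, pd i q p = mu i p * pd i u p) {i : Fin n} (hi : i ≠ α) (hp : p ∈ Ω) :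
    pd i (pd α (adjointLevy α mu u q)) p
      = A i α p * pd i (adjointLevy α mu u q) p + A α i p * pd α (adjointLevy α mu u q) p := by
  have diff {f : (Fin n → ℝ) → ℝ} (hf : ContDiffOn ℝ (⊤ : ℕ∞) f Ω) {x : Fin n → ℝ} (hx : x ∈ Ω) :
      DifferentiableAt ℝ f x := hf.differentiableAt_of_isOpen hΩ hx
  have hUα : pd α (adjointLevy α mu u q) =ᶠ[𝓝 p]
      fun x => pd α (mu α) x / mu α x * (q x / mu α x) := by
    filter_upwards [hΩ.mem_nhds hp] with x hx
    exact pd_adjointLevy_self (diff hu hx) (diff hq hx) (diff (hmusm α) hx) (hmuα0 x hx)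
      (hflux α x hx)
  have hμ0 := hmuα0 p hp
  have dq := diff hq hp
  have dμ := diff (hmusm α) hp
  have dμi := diff (hmusm i) hp
  have dφ := differentiableAt_fun_div (diff ((hmusm α).pd hΩ α) hp) dμ hμ0
  rw [hUα.pd_eq, pd_fun_mul dφ (differentiableAt_fun_div dq dμ hμ0), pd_fun_div dq dμ hμ0,
    hAα i hi p, hAi i α hi hi.symm p, pd_one_sub_div dμi dμ hμ0,
    pd_adjointLevy_self (diff hu hp) dq dμ hμ0 (hflux α p hp),
    pd_adjointLevy_of_ne (diff hu hp) dq dμ hμ0 (hflux i p hp) (hmueq α i hi.symm p hp),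
    hflux i p hp, hmueq α i hi.symm p hp, hmueq i α hi p hp]
  have hm0 := hdmuα0 p hp
  have hwi := sub_ne_zero_of_one_sub_div_ne_zero hμ0 (hw0 i hi p hp)
  field_simp
  ring

theorem pd_pd_adjointLevy_of_ne (hΩ : IsOpen Ω)
    (hasm : ∀ i j, i ≠ j → ContDiffOn ℝ (⊤ : ℕ∞) (a i j) Ω)
    (hsemi : ∀ i j k, i ≠ j → j ≠ k → i ≠ k → ∀ p ∈ Ω,
      pd k (a i j) p = a i k p * a k j p + a i j p * a j k p - a i j p * a i k p)
    (hu : ContDiffOn ℝ (⊤ : ℕ∞) u Ω)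
    (hq : ContDiffOn ℝ (⊤ : ℕ∞) q Ω) (hmusm : ∀ i, ContDiffOn ℝ (⊤ : ℕ∞) (mu i) Ω)
    (hmueq : ∀ i j, i ≠ j → ∀ p ∈ Ω, pd j (mu i) p = a i j p * (mu j p - mu i p))
    (hmuα0 : ∀ p ∈ Ω, mu α p ≠ 0)
    (hw0 : ∀ i, i ≠ α → ∀ p ∈ Ω, 1 - mu i p / mu α p ≠ 0)
    {A : Fin n → Fin n → (Fin n → ℝ) → ℝ}
    (hAi : ∀ i j, i ≠ α → j ≠ i → ∀ p,
      A i j p = a i j p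
        + pd j (fun x => 1 - mu i x / mu α x) p / (1 - mu i p / mu α p))
    (huu : ∀ i j, i ≠ j → ∀ p ∈ Ω,
        pd i (pd j u) p = a i j p * pd i u p + a j i p * pd j u p)
    (hflux : ∀ i, ∀ p ∈ Ω, pd i q p = mu i p * pd i u p) {i j : Fin n} (hij : i ≠ j)
    (hiα : i ≠ α) (hjα : j ≠ α) (hp : p ∈ Ω) :
    pd i (pd j (adjointLevy α mu u q)) p
      = A i j p * pd i (adjointLevy α mu u q) p + A j i p * pd j (adjointLevy α mu u q) p := by
  have diff {f : (Fin n → ℝ) → ℝ} (hf : ContDiffOn ℝ (⊤ : ℕ∞) f Ω) {x : Fin n → ℝ} (hx : x ∈ Ω) :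
      DifferentiableAt ℝ f x := hf.differentiableAt_of_isOpen hΩ hx
  have hUj : pd j (adjointLevy α mu u q) =ᶠ[𝓝 p]
      fun x => (1 - mu j x / mu α x) * (pd j u x - a α j x * q x / mu α x) := by
    filter_upwards [hΩ.mem_nhds hp] with x hx
    exact pd_adjointLevy_of_ne (diff hu hx) (diff hq hx) (diff (hmusm α) hx) (hmuα0 x hx)
      (hflux j x hx) (hmueq α j hjα.symm x hx)
  have hμ0 := hmuα0 p hp
  have du := diff hu hp
  have dq := diff hq hp
  have dμ := diff (hmusm α) hp
  have dμi := diff (hmusm i) hp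
  have dμj := diff (hmusm j) hp
  have daq : DifferentiableAt ℝ (fun x => a α j x * q x) p :=
    (diff (hasm α j hjα.symm) hp).fun_mul dq
  have dwj : DifferentiableAt ℝ (fun x => 1 - mu j x / mu α x) p :=
    (differentiableAt_const 1).fun_sub (differentiableAt_fun_div dμj dμ hμ0)
  have dhj : DifferentiableAt ℝ (fun x => pd j u x - a α j x * q x / mu α x) p :=
    (diff (hu.pd hΩ j) hp).fun_sub (differentiableAt_fun_div daq dμ hμ0)
  rw [hUj.pd_eq, pd_fun_mul dwj dhj,
    pd_fun_sub (diff (hu.pd hΩ j) hp) (differentiableAt_fun_div daq dμ hμ0),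
    pd_fun_div daq dμ hμ0, pd_fun_mul (diff (hasm α j hjα.symm) hp) dq,
    hAi i j hiα hij.symm p, hAi j i hjα hij p, pd_one_sub_div dμi dμ hμ0,
    pd_adjointLevy_of_ne du dq dμ hμ0 (hflux i p hp) (hmueq α i hiα.symm p hp),
    pd_adjointLevy_of_ne du dq dμ hμ0 (hflux j p hp) (hmueq α j hjα.symm p hp),
    huu i j hij p hp, hsemi α j i hjα.symm hij.symm hiα.symm p hp, hflux i p hp,
    hmueq α i hiα.symm p hp, hmueq α j hjα.symm p hp, hmueq i j hij p hp]
  have hwi := sub_ne_zero_of_one_sub_div_ne_zero hμ0 (hw0 i hiα p hp)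
  have hwj := sub_ne_zero_of_one_sub_div_ne_zero hμ0 (hw0 j hjα p hp)
  field_simp
  ring

end AdjointLevy

/-- the adjoint Lévy transform `U = u − q/μ^α` of any solution `u` of
`∂_i∂_j u = a_{ij}∂_i u + a_{ji}∂_j u` (with `q` the corresponding flux of the commuting
flow `μ`) satisfies the same system with the transformed coefficients `A = L*_α(a)`. -/
theorem stmt15 {n : ℕ} (Ω : Set (Fin n → ℝ)) (hΩ : IsOpen Ω) (α : Fin n)
    (a : Fin n → Fin n → (Fin n → ℝ) → ℝ)
    (hasm : ∀ i j, i ≠ j → ContDiffOn ℝ (⊤ : ℕ∞) (a i j) Ω)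
    (hsemi : ∀ i j k, i ≠ j → j ≠ k → i ≠ k → ∀ p ∈ Ω,
      pd k (a i j) p = a i k p * a k j p + a i j p * a j k p - a i j p * a i k p)
    (mu : Fin n → (Fin n → ℝ) → ℝ)
    (hmusm : ∀ i, ContDiffOn ℝ (⊤ : ℕ∞) (mu i) Ω)
    (hmueq : ∀ i j, i ≠ j → ∀ p ∈ Ω, pd j (mu i) p = a i j p * (mu j p - mu i p))
    (hmuα0 : ∀ p ∈ Ω, mu α p ≠ 0)
    (hdmuα0 : ∀ p ∈ Ω, pd α (mu α) p ≠ 0)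
    (hw0 : ∀ i, i ≠ α → ∀ p ∈ Ω, 1 - mu i p / mu α p ≠ 0)
    (A : Fin n → Fin n → (Fin n → ℝ) → ℝ)
    (hAα : ∀ i, i ≠ α → ∀ p,
      A α i p = a α i p
        + pd i (fun x => pd α (mu α) x / mu α x) p / (pd α (mu α) p / mu α p))
    (hAi : ∀ i j, i ≠ α → j ≠ i → ∀ p,
      A i j p = a i j p
        + pd j (fun x => 1 - mu i x / mu α x) p / (1 - mu i p / mu α p)) :
    ∀ u q : (Fin n → ℝ) → ℝ,
      ContDiffOn ℝ (⊤ : ℕ∞) u Ω → ContDiffOn ℝ (⊤ : ℕ∞) q Ω →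
      (∀ i j, i ≠ j → ∀ p ∈ Ω,
        pd i (pd j u) p = a i j p * pd i u p + a j i p * pd j u p) →
      (∀ i, ∀ p ∈ Ω, pd i q p = mu i p * pd i u p) →
      ∀ i j, i ≠ j → ∀ p ∈ Ω,
        pd i (pd j (fun x => u x - q x / mu α x)) p
          = A i j p * pd i (fun x => u x - q x / mu α x) p
            + A j i p * pd j (fun x => u x - q x / mu α x) p := by
  intro u q hu hq huu hflux i j hij p hp
  obtain rfl | hjα := eq_or_ne α j
  · exact pd_pd_adjointLevy_self hΩ hu hq hmusm hmueq hmuα0 hdmuα0 hw0 hAα hAi hflux hij hp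
  obtain rfl | hiα := eq_or_ne α i
  · have hU : ContDiffAt ℝ 2 (adjointLevy α mu u q) p :=
      ((hu.sub (hq.div (hmusm α) hmuα0)).contDiffAt (hΩ.mem_nhds hp)).of_le
        (WithTop.coe_le_coe.2 le_top)
    exact (pd_comm hU α j).trans <| (pd_pd_adjointLevy_self hΩ hu hq hmusm hmueq hmuα0 hdmuα0
      hw0 hAα hAi hflux hjα.symm hp).trans (add_comm _ _)
  · exact pd_pd_adjointLevy_of_ne hΩ hasm hsemi hu hq hmusm hmueq hmuα0 hw0 hAi huu hflux hij
      hiα.symm hjα.symm hp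
end
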